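/- Let V be a finite dimensional real inner product space, let T : V → V be a self-adjoint positive semidefinite linear operator, and let x₀ ∈ V be such that T − x₀⊗x₀ is positive semidefinite. Then (1/2)(λ₂(T) + λ₁(T) − ‖x₀‖²) ≤ ‖T − x₀⊗x₀‖_op ≤ 2(λ₂(T) + λ₁(T) − ‖x₀‖²). -/

import Mathlib

open MeasureTheory
open scoped ENNReal RealInnerProductSpace Classical

noncomputable section

/-- The outer product `x xᵀ` of a vector in Euclidean space, as a matrix. -/
def outer {d : ℕ} (x : EuclideanSpace ℝ (Fin d)) : Matrix (Fin d) (Fin d) ℝ :=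
  Matrix.of fun i j => x i * x j

/-- The trace inner product `⟨A, B⟩ = Tr (A B)` on symmetric matrices. -/
def minner {d : ℕ} (A B : Matrix (Fin d) (Fin d) ℝ) : ℝ :=
  Matrix.trace (A * B)

/-- The Frobenius norm of a matrix. -/
def frobNorm {d : ℕ} (M : Matrix (Fin d) (Fin d) ℝ) : ℝ :=
  Real.sqrt (∑ i, ∑ j, (M i j) ^ 2)

/-- Entrywise integral of a matrix-valued function. -/
def mIntegral {d : ℕ} (μ : Measure (EuclideanSpace ℝ (Fin d)))
    (F : EuclideanSpace ℝ (Fin d) → Matrix (Fin d) (Fin d) ℝ) :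
    Matrix (Fin d) (Fin d) ℝ :=
  Matrix.of fun i j => ∫ x, F x i j ∂μ

/-- The fourth moment operator `T_μ (A) = ∫ ⟨A, xxᵀ⟩ xxᵀ dμ(x)`. -/
def fourthMomentOp {d : ℕ} (μ : Measure (EuclideanSpace ℝ (Fin d)))
    (A : Matrix (Fin d) (Fin d) ℝ) : Matrix (Fin d) (Fin d) ℝ :=
  mIntegral μ (fun x => minner A (outer x) • outer x)

/-- The second moment matrix `B = ∫ xxᵀ dμ(x)`. -/
def secondMoment {d : ℕ} (μ : Measure (EuclideanSpace ℝ (Fin d))) :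
    Matrix (Fin d) (Fin d) ℝ :=
  mIntegral μ outer

/-- `lam : ℕ → ℝ` lists the eigenvalues (with multiplicity) of the fourth moment operator
`T_μ`, viewed as an operator on the `d(d+1)/2`-dimensional inner product space of symmetric
matrices, in descending order, padded by `0` beyond index `d(d+1)/2`. -/
def IsEigenSeq {d : ℕ} (μ : Measure (EuclideanSpace ℝ (Fin d))) (lam : ℕ → ℝ) : Prop :=
  Antitone lam ∧ (∀ i, d * (d + 1) / 2 ≤ i → lam i = 0) ∧
  ∃ b : Fin (d * (d + 1) / 2) → Matrix (Fin d) (Fin d) ℝ,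
    (∀ i, (b i).IsSymm) ∧
    (∀ i j, minner (b i) (b j) = if i = j then 1 else 0) ∧
    (∀ A : Matrix (Fin d) (Fin d) ℝ, A.IsSymm → A ∈ Submodule.span ℝ (Set.range b)) ∧
    (∀ i : Fin (d * (d + 1) / 2), fourthMomentOp μ (b i) = lam i • b i)

/-- The second order separation parameter `s(μ)`. -/
def sep {d : ℕ} (μ : Measure (EuclideanSpace ℝ (Fin d))) : ℝ :=
  (1 / 2) * sSup { r : ℝ | ∃ μ₁ μ₂ : Measure (EuclideanSpace ℝ (Fin d)),
    IsProbabilityMeasure μ₁ ∧ IsProbabilityMeasure μ₂ ∧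
    μ = (2 : ℝ≥0∞)⁻¹ • μ₁ + (2 : ℝ≥0∞)⁻¹ • μ₂ ∧
    r = frobNorm (secondMoment μ₁ - secondMoment μ₂) }

/-- The standard Gaussian measure `N(0, I)` on `ℝ^d`. -/
def stdGaussian (d : ℕ) : Measure (EuclideanSpace ℝ (Fin d)) :=
  (Measure.pi fun _ : Fin d => ProbabilityTheory.gaussianReal 0 1).map
    (MeasurableEquiv.toLp 2 (Fin d → ℝ))

/-- The square root of a positive semidefinite matrix, as `Matrix.PosSemidef.sqrt` was defined
in the older Mathlib. -/
def posSemidefSqrtOld {n : Type*} [Fintype n] [DecidableEq n] {A : Matrix n n ℝ}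
    (hA : A.PosSemidef) : Matrix n n ℝ :=
  (hA.1.eigenvectorUnitary : Matrix n n ℝ) *
    Matrix.diagonal ((fun x : ℝ => Real.sqrt x) ∘ hA.1.eigenvalues) *
    (star hA.1.eigenvectorUnitary : Matrix n n ℝ)

/-- The centered Gaussian measure `N(0, B)` on `ℝ^d` with positive semidefinite
covariance matrix `B`, obtained as the pushforward of `N(0, I)` by `B^{1/2}`. -/
def gaussianCov {d : ℕ} (B : Matrix (Fin d) (Fin d) ℝ) :
    Measure (EuclideanSpace ℝ (Fin d)) :=
  if hB : B.PosSemidef then (stdGaussian d).map (fun x => Matrix.toEuclideanLin (posSemidefSqrtOld hB) x)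
  else 0

/-- The positive semidefinite square root `B^{1/2}` of a positive semidefinite matrix. -/
def psdSqrt {d : ℕ} (B : Matrix (Fin d) (Fin d) ℝ) : Matrix (Fin d) (Fin d) ℝ :=
  if hB : B.PosSemidef then posSemidefSqrtOld hB else 0

/-- The rank one operator `x₀ ⊗ x₀ : v ↦ ⟨v, x₀⟩ x₀` on an inner product space. -/
def rankOne {V : Type*} [NormedAddCommGroup V] [InnerProductSpace ℝ V] (x₀ : V) :
    V →ₗ[ℝ] V where
  toFun v := ⟪v, x₀⟫ • x₀
  map_add' a b := by simp [inner_add_left, add_smul]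
  map_smul' c a := by simp [inner_smul_left, smul_smul]

/-! Let `e` be a unit top eigenvector of `T`, `α = ⟪e, x₀⟫` and `S = T - x₀ ⊗ x₀ ≥ 0`.
Testing `S ≥ 0` at `x₀` and at `x₀ - α e ⊥ e` gives `‖x₀‖² ≤ λ₁` and `‖x₀‖² - α² ≤ λ₂`.
Writing `v = c e + w` with `w ⊥ e`, positivity of `S` gives
`⟪S v, v⟫ ≤ 2 (⟪S (c e), c e⟫ + ⟪S w, w⟫) ≤ 2 (c² (λ₁ - α²) + λ₂ ‖w‖²)`, and both coefficients are
at most `λ₁ + λ₂ - ‖x₀‖²`: this is the upper bound. For the lower bound,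
`⟪S e, e⟫ = λ₁ - α² ≥ λ₁ - ‖x₀‖²`, and a nonzero vector orthogonal to `x₀` in the span of the top
two eigenvectors has `⟪S v, v⟫ = ⟪T v, v⟫ ≥ λ₂ ‖v‖²`. -/

section
variable {V : Type*} [NormedAddCommGroup V] [InnerProductSpace ℝ V]

theorem rankOne_apply (x₀ v : V) : rankOne x₀ v = ⟪v, x₀⟫ • x₀ := rfl

theorem inner_sub_rankOne_apply_self (T : V →ₗ[ℝ] V) (x₀ v : V) :
    ⟪(T - rankOne x₀) v, v⟫ = ⟪T v, v⟫ - ⟪v, x₀⟫ ^ 2 := by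
  rw [LinearMap.sub_apply, inner_sub_left, rankOne_apply, real_inner_smul_left,
    real_inner_comm x₀ v, sq]

theorem isSymmetric_rankOne (x₀ : V) : (rankOne x₀).IsSymmetric := fun u v => by
  rw [rankOne_apply, rankOne_apply, real_inner_smul_left, real_inner_smul_right,
    real_inner_comm x₀ v, mul_comm]

theorem inner_sub_inner_smul_eq_zero {e : V} (he : ‖e‖ = 1) (v : V) :
    ⟪e, v - ⟪e, v⟫ • e⟫ = 0 := by
  rw [inner_sub_right, real_inner_smul_right, real_inner_self_eq_norm_sq, he]
  ring

theorem sq_norm_eq_inner_sq_add_sq_norm_sub {e : V} (he : ‖e‖ = 1) (v : V) :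
    ‖v‖ ^ 2 = ⟪e, v⟫ ^ 2 + ‖v - ⟪e, v⟫ • e‖ ^ 2 := by
  rw [norm_sub_sq_real, real_inner_smul_right, norm_smul, he, Real.norm_eq_abs, real_inner_comm]
  ring_nf
  rw [sq_abs]
  ring

theorem inner_sub_inner_smul_self_eq {e : V} (he : ‖e‖ = 1) (v : V) :
    ⟪v - ⟪e, v⟫ • e, v⟫ = ‖v - ⟪e, v⟫ • e‖ ^ 2 := by
  rw [← real_inner_self_eq_norm_sq, inner_sub_right _ v, real_inner_smul_right, real_inner_comm e,
    inner_sub_inner_smul_eq_zero he, mul_zero, sub_zero]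

theorem inner_map_add_self_le {S : V →ₗ[ℝ] V} (hS : ∀ v, 0 ≤ ⟪S v, v⟫) (a b : V) :
    ⟪S (a + b), a + b⟫ ≤ 2 * (⟪S a, a⟫ + ⟪S b, b⟫) := by
  have := hS (a - b)
  simp only [map_add, map_sub, inner_add_left, inner_add_right, inner_sub_left,
    inner_sub_right] at this ⊢
  linarith

theorem ContinuousLinearMap.inner_map_self_le_opNorm_mul_sq (S : V →L[ℝ] V) (v : V) :
    ⟪S v, v⟫ ≤ ‖S‖ * ‖v‖ ^ 2 :=
  calc ⟪S v, v⟫ ≤ ‖S v‖ * ‖v‖ := real_inner_le_norm _ _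
    _ ≤ ‖S‖ * ‖v‖ * ‖v‖ := by gcongr; exact S.le_opNorm v
    _ = ‖S‖ * ‖v‖ ^ 2 := by ring

theorem ContinuousLinearMap.le_opNorm_of_le_inner_map_self (S : V →L[ℝ] V) {v : V} (hv : v ≠ 0)
    {c : ℝ} (hc : c * ‖v‖ ^ 2 ≤ ⟪S v, v⟫) : c ≤ ‖S‖ :=
  le_of_mul_le_mul_right (hc.trans (S.inner_map_self_le_opNorm_mul_sq v)) (by positivity)

theorem ContinuousLinearMap.opNorm_le_of_abs_inner_map_self_le (S : V →L[ℝ] V)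
    (hS : (S : V →ₗ[ℝ] V).IsSymmetric) {M : ℝ} (hM : 0 ≤ M)
    (h : ∀ v, |⟪S v, v⟫| ≤ M * ‖v‖ ^ 2) : ‖S‖ ≤ M := by
  rw [S.norm_eq_iSup_rayleighQuotient hS]
  refine ciSup_le fun v => ?_
  rcases eq_or_ne v 0 with rfl | hv
  · simpa using hM
  · rw [rayleighQuotient, reApplyInnerSelf_apply, RCLike.re_to_real, abs_div, abs_sq,
      div_le_iff₀ (by positivity)]
    exact h v

namespace OrthonormalBasis
variable {ι : Type*} [Fintype ι] {T : V →ₗ[ℝ] V} {μ : ι → ℝ} (B : OrthonormalBasis ι ℝ V)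

theorem inner_map_self_eq_sum_of_eigen (hB : ∀ i, T (B i) = μ i • B i) (v : V) :
    ⟪T v, v⟫ = ∑ i, μ i * ⟪B i, v⟫ ^ 2 := by
  nth_rewrite 1 [← B.sum_repr' v]
  simp only [map_sum, _root_.map_smul, hB, smul_smul, sum_inner, real_inner_smul_left]
  exact Finset.sum_congr rfl fun i _ => by ring

theorem inner_map_self_le_of_eigen (hB : ∀ i, T (B i) = μ i • B i) {v : V} {c : ℝ}
    (hc : ∀ i, ⟪B i, v⟫ ≠ 0 → μ i ≤ c) : ⟪T v, v⟫ ≤ c * ‖v‖ ^ 2 := by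
  rw [B.inner_map_self_eq_sum_of_eigen hB, ← B.sum_sq_inner_right, Finset.mul_sum]
  refine Finset.sum_le_sum fun i _ => ?_
  by_cases hi : ⟪B i, v⟫ = 0
  · simp [hi]
  · exact mul_le_mul_of_nonneg_right (hc i hi) (sq_nonneg _)

end OrthonormalBasis

variable {T : V →ₗ[ℝ] V} {x₀ e : V} {μ₀ μ₁ : ℝ}

theorem sq_norm_le_of_sub_rankOne_nonneg (hpsd : ∀ v, 0 ≤ ⟪(T - rankOne x₀) v, v⟫) {u : V}
    {c : ℝ} (hu : ⟪u, x₀⟫ = ‖u‖ ^ 2) (hc : ⟪T u, u⟫ ≤ c * ‖u‖ ^ 2) (hc₀ : 0 ≤ c) :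
    ‖u‖ ^ 2 ≤ c := by
  have h := hpsd u
  rw [inner_sub_rankOne_apply_self, hu] at h
  by_contra! hlt
  nlinarith [mul_lt_mul_of_pos_right hlt (hc₀.trans_lt hlt)]

theorem inner_sub_rankOne_apply_self_le (hpsd : ∀ v, 0 ≤ ⟪(T - rankOne x₀) v, v⟫)
    (he : ‖e‖ = 1) (hμ₀ : ∀ v, ⟪T v, v⟫ ≤ μ₀ * ‖v‖ ^ 2)
    (hμ₁ : ∀ v, ⟪e, v⟫ = 0 → ⟪T v, v⟫ ≤ μ₁ * ‖v‖ ^ 2) (hμ₁₀ : 0 ≤ μ₁) (v : V) :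
    ⟪(T - rankOne x₀) v, v⟫ ≤ 2 * (μ₁ + μ₀ - ‖x₀‖ ^ 2) * ‖v‖ ^ 2 := by
  set α := ⟪e, x₀⟫
  set u := x₀ - α • e
  have hTe : ⟪T e, e⟫ ≤ μ₀ := by simpa [he] using hμ₀ e
  have hx₀ : ‖x₀‖ ^ 2 ≤ μ₀ := by
    refine sq_norm_le_of_sub_rankOne_nonneg hpsd (real_inner_self_eq_norm_sq x₀) (hμ₀ x₀) ?_
    have := hpsd e
    rw [inner_sub_rankOne_apply_self] at this
    nlinarith [sq_nonneg ⟪e, x₀⟫]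
  have hu : ‖u‖ ^ 2 ≤ μ₁ :=
    sq_norm_le_of_sub_rankOne_nonneg hpsd (inner_sub_inner_smul_self_eq he x₀)
      (hμ₁ u (inner_sub_inner_smul_eq_zero he x₀)) hμ₁₀
  have hcoef₀ : μ₀ - α ^ 2 ≤ μ₁ + μ₀ - ‖x₀‖ ^ 2 := by
    linarith [sq_norm_eq_inner_sq_add_sq_norm_sub he x₀]
  have hcoef₁ : μ₁ ≤ μ₁ + μ₀ - ‖x₀‖ ^ 2 := by linarith
  set c := ⟪e, v⟫
  set w := v - c • e
  have hce : ⟪(T - rankOne x₀) (c • e), c • e⟫ ≤ c ^ 2 * (μ₀ - α ^ 2) := by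
    rw [inner_sub_rankOne_apply_self, _root_.map_smul, real_inner_smul_left,
      real_inner_smul_left, real_inner_smul_right]
    nlinarith [mul_le_mul_of_nonneg_left hTe (sq_nonneg c)]
  have hw : ⟪(T - rankOne x₀) w, w⟫ ≤ μ₁ * ‖w‖ ^ 2 := by
    rw [inner_sub_rankOne_apply_self]
    nlinarith [hμ₁ w (inner_sub_inner_smul_eq_zero he v), sq_nonneg ⟪w, x₀⟫]
  calc ⟪(T - rankOne x₀) v, v⟫ = ⟪(T - rankOne x₀) (c • e + w), c • e + w⟫ := by
        rw [add_sub_cancel]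
    _ ≤ 2 * (⟪(T - rankOne x₀) (c • e), c • e⟫ + ⟪(T - rankOne x₀) w, w⟫) :=
        inner_map_add_self_le hpsd _ _
    _ ≤ 2 * (c ^ 2 * (μ₀ - α ^ 2) + μ₁ * ‖w‖ ^ 2) := by gcongr
    _ ≤ 2 * (μ₁ + μ₀ - ‖x₀‖ ^ 2) * (c ^ 2 + ‖w‖ ^ 2) := by
        nlinarith [mul_le_mul_of_nonneg_left hcoef₀ (sq_nonneg c),
          mul_le_mul_of_nonneg_right hcoef₁ (sq_nonneg ‖w‖)]
    _ = 2 * (μ₁ + μ₀ - ‖x₀‖ ^ 2) * ‖v‖ ^ 2 := by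
        rw [sq_norm_eq_inner_sq_add_sq_norm_sub he v]

variable [FiniteDimensional ℝ V]

theorem opNorm_sub_rankOne_le (hT : T.IsSymmetric) (hpsd : ∀ v, 0 ≤ ⟪(T - rankOne x₀) v, v⟫)
    (he : ‖e‖ = 1) (hμ₀ : ∀ v, ⟪T v, v⟫ ≤ μ₀ * ‖v‖ ^ 2)
    (hμ₁ : ∀ v, ⟪e, v⟫ = 0 → ⟪T v, v⟫ ≤ μ₁ * ‖v‖ ^ 2) (hμ₁₀ : 0 ≤ μ₁) :
    ‖LinearMap.toContinuousLinearMap (T - rankOne x₀)‖ ≤ 2 * (μ₁ + μ₀ - ‖x₀‖ ^ 2) := by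
  have hquad := inner_sub_rankOne_apply_self_le hpsd he hμ₀ hμ₁ hμ₁₀
  refine ContinuousLinearMap.opNorm_le_of_abs_inner_map_self_le _
    (hT.sub (isSymmetric_rankOne x₀)) ?_ fun v => ?_
  · simpa [he] using (hpsd e).trans (hquad e)
  · rw [LinearMap.coe_toContinuousLinearMap', abs_of_nonneg (hpsd v)]
    exact hquad v

theorem sub_sq_norm_le_opNorm_sub_rankOne (he : ‖e‖ = 1) (hTe : T e = μ₀ • e) :
    μ₀ - ‖x₀‖ ^ 2 ≤ ‖LinearMap.toContinuousLinearMap (T - rankOne x₀)‖ := by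
  refine ContinuousLinearMap.le_opNorm_of_le_inner_map_self _ (v := e)
    (norm_ne_zero_iff.1 (he ▸ one_ne_zero)) ?_
  rw [LinearMap.coe_toContinuousLinearMap', inner_sub_rankOne_apply_self, hTe,
    real_inner_smul_left, real_inner_self_eq_norm_sq, he]
  have := real_inner_mul_inner_self_le e x₀
  rw [real_inner_self_eq_norm_sq, real_inner_self_eq_norm_sq, he] at this
  nlinarith

theorem le_opNorm_sub_rankOne_of_eigenvectors {f : V} (he : ‖e‖ = 1) (hf : ‖f‖ = 1)
    (hef : ⟪e, f⟫ = 0) (hTe : T e = μ₀ • e) (hTf : T f = μ₁ • f) (hμ : μ₁ ≤ μ₀) :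
    μ₁ ≤ ‖LinearMap.toContinuousLinearMap (T - rankOne x₀)‖ := by
  obtain ⟨p, q, hpq, hx₀⟩ : ∃ p q : ℝ, (p ≠ 0 ∨ q ≠ 0) ∧ ⟪p • e + q • f, x₀⟫ = 0 := by
    by_cases h : ⟪f, x₀⟫ = 0
    · exact ⟨0, 1, by simp, by simpa using h⟩
    · refine ⟨⟪f, x₀⟫, -⟪e, x₀⟫, .inl h, ?_⟩
      rw [inner_add_left, real_inner_smul_left, real_inner_smul_left]
      ring
  have hfe : ⟪f, e⟫ = 0 := by rw [real_inner_comm, hef]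
  have hnorm : ‖p • e + q • f‖ ^ 2 = p ^ 2 + q ^ 2 := by
    rw [norm_add_sq_real, real_inner_smul_left, real_inner_smul_right, hef, norm_smul, norm_smul,
      he, hf, Real.norm_eq_abs, Real.norm_eq_abs, mul_pow, mul_pow, sq_abs, sq_abs]
    ring
  have hpos : 0 < p ^ 2 + q ^ 2 := by
    rcases hpq with h | h <;> positivity
  refine ContinuousLinearMap.le_opNorm_of_le_inner_map_self _ (v := p • e + q • f)
    (norm_ne_zero_iff.1 (by nlinarith)) ?_
  rw [LinearMap.coe_toContinuousLinearMap', inner_sub_rankOne_apply_self, hx₀, hnorm]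
  simp only [map_add, _root_.map_smul, hTe, hTf, inner_add_left, inner_add_right,
    real_inner_smul_left, real_inner_smul_right, real_inner_self_eq_norm_sq, he, hf, hef, hfe]
  nlinarith [sq_nonneg p]

end

theorem opNorm_sub_rankOne_bounds_general
    {V : Type*} [NormedAddCommGroup V] [InnerProductSpace ℝ V] [FiniteDimensional ℝ V]
    (T : V →ₗ[ℝ] V) (hT : T.IsSymmetric)
    (x₀ : V) (hpsd : ∀ v, 0 ≤ ⟪T v - rankOne x₀ v, v⟫)
    -- `lam` lists the eigenvalues of `T` in descending order (padded with `0`):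
    (lam : ℕ → ℝ) (hanti : Antitone lam)
    (hpad : ∀ i, Module.finrank ℝ V ≤ i → lam i = 0)
    (b : Fin (Module.finrank ℝ V) → V) (hb : Orthonormal ℝ b)
    (hspan : Submodule.span ℝ (Set.range b) = ⊤)
    (heig : ∀ i : Fin (Module.finrank ℝ V), T (b i) = lam i • b i) :
    (1 / 2) * (lam 1 + lam 0 - ‖x₀‖ ^ 2) ≤
        ‖LinearMap.toContinuousLinearMap (T - rankOne x₀)‖ ∧
      ‖LinearMap.toContinuousLinearMap (T - rankOne x₀)‖ ≤
        2 * (lam 1 + lam 0 - ‖x₀‖ ^ 2) := by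
  have hlam₁ : 0 ≤ lam 1 := (hpad _ (Nat.le_succ _)).symm.trans_le (hanti (by omega))
  rcases Nat.eq_zero_or_pos (Module.finrank ℝ V) with hn | hn
  · have : Subsingleton V := Module.finrank_zero_iff.1 hn
    simp [Subsingleton.elim x₀ 0, Subsingleton.elim (LinearMap.toContinuousLinearMap _) 0,
      hpad 0 hn.le, hpad 1 (by omega)]
  set B := OrthonormalBasis.mk hb hspan.ge
  have hB : ∀ i, T (B i) = lam i • B i := by simpa [B] using heig
  have htop (v : V) : ⟪T v, v⟫ ≤ lam 0 * ‖v‖ ^ 2 :=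
    B.inner_map_self_le_of_eigen hB fun i _ => hanti (Nat.zero_le _)
  have hsecond (v : V) (hv : ⟪b ⟨0, hn⟩, v⟫ = 0) : ⟪T v, v⟫ ≤ lam 1 * ‖v‖ ^ 2 := by
    refine B.inner_map_self_le_of_eigen hB fun i hi => hanti (Nat.one_le_iff_ne_zero.2 fun h => ?_)
    obtain rfl : i = ⟨0, hn⟩ := Fin.ext h
    exact hi (by simpa [B] using hv)
  have hupper := opNorm_sub_rankOne_le hT hpsd (hb.1 _) htop hsecond hlam₁
  have hlower₀ := sub_sq_norm_le_opNorm_sub_rankOne (x₀ := x₀) (hb.1 _) (heig ⟨0, hn⟩)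
  have hlower₁ : lam 1 ≤ ‖LinearMap.toContinuousLinearMap (T - rankOne x₀)‖ := by
    rcases lt_or_ge (Module.finrank ℝ V) 2 with hn₂ | hn₂
    · exact (hpad 1 (by omega)).trans_le (norm_nonneg _)
    · exact le_opNorm_sub_rankOne_of_eigenvectors (hb.1 ⟨0, hn⟩) (hb.1 ⟨1, hn₂⟩)
        (hb.2 (by simp [Fin.ext_iff])) (heig _) (heig _) (hanti zero_le_one)
  exact ⟨by linarith, hupper⟩

/-- if `T` is positive semidefinite and `T - x₀ ⊗ x₀` is positive
semidefinite, then `(1/2)(λ₂(T) + λ₁(T) - ‖x₀‖²) ≤ ‖T - x₀ ⊗ x₀‖_op ≤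
2(λ₂(T) + λ₁(T) - ‖x₀‖²)`. -/
theorem opNorm_sub_rankOne_bounds
    {V : Type*} [NormedAddCommGroup V] [InnerProductSpace ℝ V] [FiniteDimensional ℝ V]
    (T : V →ₗ[ℝ] V) (hT : T.IsSymmetric) (hTpsd : ∀ v, 0 ≤ ⟪T v, v⟫)
    (x₀ : V) (hpsd : ∀ v, 0 ≤ ⟪T v - rankOne x₀ v, v⟫)
    -- `lam` lists the eigenvalues of `T` in descending order (padded with `0`):
    (lam : ℕ → ℝ) (hanti : Antitone lam)
    (hpad : ∀ i, Module.finrank ℝ V ≤ i → lam i = 0)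
    (b : Fin (Module.finrank ℝ V) → V) (hb : Orthonormal ℝ b)
    (hspan : Submodule.span ℝ (Set.range b) = ⊤)
    (heig : ∀ i : Fin (Module.finrank ℝ V), T (b i) = lam i • b i) :
    (1 / 2) * (lam 1 + lam 0 - ‖x₀‖ ^ 2) ≤
        ‖LinearMap.toContinuousLinearMap (T - rankOne x₀)‖ ∧
      ‖LinearMap.toContinuousLinearMap (T - rankOne x₀)‖ ≤
        2 * (lam 1 + lam 0 - ‖x₀‖ ^ 2) :=
  opNorm_sub_rankOne_bounds_general T hT x₀ hpsd lam hanti hpad b hb hspan heig
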